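/- Let L be a finite geometric lattice and p ∈ L with p ≠ 0. Then the chain complex (A*([0,p]), ∂) obtained by restricting the Orlik–Solomon differential ∂ to the OS-algebra of the interval [0,p], graded so that the degree −i part is ⊕_{q ≤ p, r(q)=i} A*([0,p])_q, is exact. -/

import Mathlib

open scoped Classical

structure GeometricLattice (L : Type*) [Lattice L] [OrderBot L] [Fintype L] where
  rk : L → ℕ
  rk_bot : rk ⊥ = 0
  rk_strictMono : StrictMono rk
  rk_covby : ∀ {p q : L}, p ⋖ q → rk q = rk p + 1
  submodular : ∀ p q : L, rk (p ⊓ q) + rk (p ⊔ q) ≤ rk p + rk q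
  atomistic : ∀ p : L, p ≠ ⊥ → ∃ S : Finset L, (∀ a ∈ S, IsAtom a) ∧ p = S.sup id

variable (R : Type*) [CommRing R] (L : Type*) [Lattice L] [OrderBot L] [Fintype L]

/-- The type of atoms of `L`. -/
def Atoms : Type _ := {a : L // IsAtom a}

noncomputable instance : Fintype (Atoms L) := Subtype.fintype _

/-- A fixed enumeration of the elements of `L`, used only to order the atoms in
exterior-algebra sign computations. -/
noncomputable def elemIdx : L → ℕ := fun x => ((Fintype.equivFin L) x : ℕ)

/-- The underlying module of the exterior algebra `E^*(L)` on the atoms of `L`: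
the free `R`-module with basis `e_S` for `S` a finite set of atoms. -/
def OSModule : Type _ := Finset (Atoms L) →₀ R

noncomputable instance : AddCommGroup (OSModule R L) := Finsupp.instAddCommGroup
noncomputable instance : Module R (OSModule R L) := Finsupp.module _ _

/-- basis vector `e_S` -/
noncomputable def osE (S : Finset (Atoms L)) : OSModule R L := Finsupp.single S 1

/-- the sign exponent of `a` inside `S`. -/
noncomputable def delSign (S : Finset (Atoms L)) (a : Atoms L) : ℕ :=
  (S.filter (fun b => elemIdx L b.val < elemIdx L a.val)).card

/-- the Orlik–Solomon derivation `∂ e_S = ∑_j (-1)^{j-1} e_{S \ a_j}`. -/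
noncomputable def osDel : OSModule R L →ₗ[R] OSModule R L :=
  Finsupp.lift (OSModule R L) R (Finset (Atoms L)) fun S =>
    ∑ a ∈ S, ((-1 : R) ^ delSign L S a) • osE R L (S.erase a)

/-- number of inversions between `S` and `T` in the chosen ordering. -/
noncomputable def mulSign (S T : Finset (Atoms L)) : ℕ :=
  ((S ×ˢ T).filter (fun x => elemIdx L x.2.val < elemIdx L x.1.val)).card

/-- the exterior product on `E^*(L)`: `e_S ⋅ e_T = ± e_{S ∪ T}` if `S, T` are
disjoint, and `0` otherwise. -/
noncomputable def osMul : OSModule R L →ₗ[R] OSModule R L →ₗ[R] OSModule R L :=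
  Finsupp.lift (OSModule R L →ₗ[R] OSModule R L) R (Finset (Atoms L)) fun S =>
    Finsupp.lift (OSModule R L) R (Finset (Atoms L)) fun T =>
      if Disjoint S T then ((-1 : R) ^ mulSign L S T) • osE R L (S ∪ T) else 0

/-- a set of atoms is dependent if the rank of its join is less than its size. -/
def IsDepSet (gl : GeometricLattice L) (S : Finset (Atoms L)) : Prop :=
  gl.rk (S.sup fun a => a.val) < S.card

/-- The Orlik–Solomon ideal: the span of all products `e_T ⋅ ∂ e_S` for `S` a
dependent set of atoms (this spans the two-sided ideal generated by the `∂ e_S`). -/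
noncomputable def osIdeal (gl : GeometricLattice L) : Submodule R (OSModule R L) :=
  Submodule.span R {x | ∃ (T S : Finset (Atoms L)), IsDepSet L gl S ∧
    x = osMul R L (osE R L T) (osDel R L (osE R L S))}

/-- the `L`-homogeneous part of `E^*(L)` of order `p`: the span of the `e_S` with
`⋁ S = p`. -/
noncomputable def osPiece (p : L) : Submodule R (OSModule R L) :=
  Submodule.span R {x | ∃ S : Finset (Atoms L), (S.sup fun a => a.val) = p ∧ x = osE R L S}

/-- The degree-`i` part (with respect to the negative grading by rank) of the
exterior algebra of the interval `[⊥, p]`: the span of the monomials `e_S` with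
all atoms of `S` below `p` and `rk (⋁ S) = i`. -/
noncomputable def osIntervalPiece (gl : GeometricLattice L) (p : L) (i : ℕ) :
    Submodule R (OSModule R L) :=
  Submodule.span R {x | ∃ S : Finset (Atoms L), (∀ a ∈ S, a.val ≤ p) ∧
    gl.rk (S.sup fun a => a.val) = i ∧ x = osE R L S}

/-- The Orlik–Solomon ideal of the interval `[⊥, p]` inside `E^*([⊥, p])`. -/
noncomputable def osIntervalIdeal (gl : GeometricLattice L) (p : L) :
    Submodule R (OSModule R L) :=
  Submodule.span R {x | ∃ (T S : Finset (Atoms L)), (∀ a ∈ T, a.val ≤ p) ∧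
    (∀ a ∈ S, a.val ≤ p) ∧ IsDepSet L gl S ∧
    x = osMul R L (osE R L T) (osDel R L (osE R L S))}


/-! Fix an atom `b ≤ p`. Left multiplication by `e_b` is a contracting homotopy of the
exterior algebra: `∂ (e_b z) + e_b (∂ z) = z`. It preserves the Orlik–Solomon ideal of
`[⊥, p]`, and it raises the rank of a monomial `e_S` by one unless `b ∨ ⋁ S = ⋁ S`, in
which case `S ∪ {b}` is dependent and `∂ (e_b e_S)` lies in the ideal. So a cycle `x` of
rank `i` is congruent to `∂ (e_b x)`, the boundary of an element of rank `i + 1`. -/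

namespace GeometricLattice

variable {L}

lemma rk_of_isAtom (gl : GeometricLattice L) {a : L} (ha : IsAtom a) : gl.rk a = 1 := by
  rw [gl.rk_covby ha.bot_covBy, gl.rk_bot]

lemma rk_sup_le_of_isAtom (gl : GeometricLattice L) {a : L} (ha : IsAtom a) (x : L) :
    gl.rk (a ⊔ x) ≤ gl.rk x + 1 := by
  have := gl.submodular a x
  rw [gl.rk_of_isAtom ha] at this
  omega

lemma rk_sup_atoms_le_card (gl : GeometricLattice L) (S : Finset (Atoms L)) :
    gl.rk (S.sup fun a => a.val) ≤ S.card := by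
  induction S using Finset.induction_on with
  | empty => simp [gl.rk_bot]
  | @insert a S ha ih =>
    rw [Finset.sup_insert, Finset.card_insert_of_notMem ha]
    exact (gl.rk_sup_le_of_isAtom a.2 _).trans (by omega)

end GeometricLattice

section Signs

variable {L}

lemma delSign_erase_self (T : Finset (Atoms L)) (b : Atoms L) :
    delSign L (T.erase b) b = delSign L T b := by
  have hb : b ∉ T.filter fun c => elemIdx L c.val < elemIdx L b.val := fun h =>
    lt_irrefl _ (Finset.mem_filter.1 h).2
  rw [delSign, delSign, Finset.filter_erase, Finset.erase_eq_of_notMem hb]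

lemma delSign_insert_self (T : Finset (Atoms L)) (b : Atoms L) :
    delSign L (insert b T) b = delSign L T b := by
  rw [delSign, delSign, Finset.filter_insert, if_neg (lt_irrefl _)]

lemma delSign_union {T C : Finset (Atoms L)} (h : Disjoint T C) (b : Atoms L) :
    delSign L (T ∪ C) b = delSign L T b + delSign L C b := by
  rw [delSign, Finset.filter_union, Finset.card_union_of_disjoint (Finset.disjoint_filter_filter h)]
  rfl

/-- The pair `{a, b}` contributes an inversion to exactly one side. -/
lemma delSign_insert_add_delSign {T : Finset (Atoms L)} {a b : Atoms L} (ha : a ∈ T)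
    (hb : b ∉ T) :
    delSign L (insert b T) a + delSign L T b = delSign L T a + delSign L (T.erase a) b + 1 := by
  have hab : elemIdx L a.val ≠ elemIdx L b.val := fun h => ne_of_mem_of_not_mem ha hb
    (Subtype.ext ((Fintype.equivFin L).injective (Fin.val_injective h)))
  unfold delSign
  rw [Finset.filter_insert, Finset.filter_erase]
  rcases hab.lt_or_gt with h | h
  · have ha' : a ∈ T.filter fun c => elemIdx L c.val < elemIdx L b.val :=
      Finset.mem_filter.2 ⟨ha, h⟩
    rw [if_neg h.asymm, ← Finset.card_erase_add_one ha']
    omega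
  · have hb' : b ∉ T.filter fun c => elemIdx L c.val < elemIdx L a.val := fun h' =>
      hb (Finset.mem_filter.1 h').1
    have ha' : a ∉ T.filter fun c => elemIdx L c.val < elemIdx L b.val := fun h' =>
      h.asymm (Finset.mem_filter.1 h').2
    rw [if_pos h, Finset.card_insert_of_notMem hb', Finset.erase_eq_of_notMem ha']
    omega

lemma mulSign_singleton_left (b : Atoms L) (T : Finset (Atoms L)) :
    mulSign L {b} T = delSign L T b := by
  rw [mulSign, Finset.singleton_product, Finset.filter_map, Finset.card_map]
  rfl

lemma mulSign_insert_left {b : Atoms L} {T : Finset (Atoms L)} (hb : b ∉ T)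
    (C : Finset (Atoms L)) :
    mulSign L (insert b T) C = delSign L C b + mulSign L T C := by
  rw [Finset.insert_eq, ← mulSign_singleton_left, mulSign, mulSign, mulSign, Finset.union_product,
    Finset.filter_union, Finset.card_union_of_disjoint]
  exact Finset.disjoint_filter_filter
    (Finset.disjoint_product.2 (Or.inl (Finset.disjoint_singleton_left.2 hb)))

end Signs

omit [Fintype L] in
lemma OSModule.linearMap_ext {M : Type*} [AddCommGroup M] [Module R M]
    {f g : OSModule R L →ₗ[R] M} (h : ∀ S, f (osE R L S) = g (osE R L S)) : f = g :=
  Finsupp.lhom_ext' fun S => LinearMap.ext_ring (h S)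

lemma osDel_osE (S : Finset (Atoms L)) :
    osDel R L (osE R L S) = ∑ a ∈ S, ((-1 : R) ^ delSign L S a) • osE R L (S.erase a) := by
  unfold osDel osE
  erw [Finsupp.lift_apply, Finsupp.sum_single_index (by exact zero_smul _ _), one_smul]

lemma osMul_osE (S T : Finset (Atoms L)) :
    osMul R L (osE R L S) (osE R L T) =
      if Disjoint S T then ((-1 : R) ^ mulSign L S T) • osE R L (S ∪ T) else 0 := by
  unfold osMul osE
  erw [Finsupp.lift_apply, Finsupp.sum_single_index (by exact zero_smul _ _), one_smul,
    Finsupp.lift_apply, Finsupp.sum_single_index (by exact zero_smul _ _), one_smul]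

lemma osMul_osE_empty (z : OSModule R L) : osMul R L (osE R L ∅) z = z := by
  refine LinearMap.congr_fun (g := LinearMap.id) (OSModule.linearMap_ext R L fun C => ?_) z
  simp [osMul_osE, mulSign]

section

variable {R L}

lemma osMul_osE_singleton_of_mem {b : Atoms L} {T : Finset (Atoms L)} (hb : b ∈ T) :
    osMul R L (osE R L {b}) (osE R L T) = 0 := by
  rw [osMul_osE, if_neg fun h => Finset.disjoint_singleton_left.1 h hb]

lemma osMul_osE_singleton_of_notMem {b : Atoms L} {T : Finset (Atoms L)} (hb : b ∉ T) :
    osMul R L (osE R L {b}) (osE R L T) = ((-1 : R) ^ delSign L T b) • osE R L (insert b T) := by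
  rw [osMul_osE, if_pos (Finset.disjoint_singleton_left.2 hb), mulSign_singleton_left,
    Finset.insert_eq]

lemma osMul_singleton_osDel_osE_of_mem {b : Atoms L} {T : Finset (Atoms L)} (hb : b ∈ T) :
    osMul R L (osE R L {b}) (osDel R L (osE R L T)) = osE R L T := by
  rw [osDel_osE, map_sum, Finset.sum_eq_single b]
  · rw [map_smul, osMul_osE_singleton_of_notMem (Finset.notMem_erase b T), smul_smul, ← pow_add,
      delSign_erase_self, Even.neg_one_pow ⟨_, rfl⟩, one_smul, Finset.insert_erase hb]
  · intro a _ hab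
    rw [map_smul, osMul_osE_singleton_of_mem (Finset.mem_erase.2 ⟨Ne.symm hab, hb⟩), smul_zero]
  · exact fun h => absurd hb h

lemma osDel_osMul_singleton_osE_add_of_notMem {b : Atoms L} {T : Finset (Atoms L)} (hb : b ∉ T) :
    osDel R L (osMul R L (osE R L {b}) (osE R L T))
      + osMul R L (osE R L {b}) (osDel R L (osE R L T)) = osE R L T := by
  rw [osMul_osE_singleton_of_notMem hb, map_smul, osDel_osE, Finset.sum_insert hb,
    Finset.erase_insert hb, delSign_insert_self, smul_add, smul_smul, ← pow_add,
    Even.neg_one_pow ⟨_, rfl⟩, one_smul, add_assoc, add_eq_left, osDel_osE, map_sum,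
    Finset.smul_sum, ← Finset.sum_add_distrib]
  refine Finset.sum_eq_zero fun a ha => ?_
  have hbT : b ∉ T.erase a := fun h => hb (Finset.mem_of_mem_erase h)
  rw [Finset.erase_insert_of_ne (ne_of_mem_of_not_mem ha hb).symm, map_smul,
    osMul_osE_singleton_of_notMem hbT, smul_smul, smul_smul, ← pow_add, ← pow_add, ← add_smul,
    add_comm (delSign L T b), delSign_insert_add_delSign ha hb, pow_succ]
  simp

lemma osDel_osMul_singleton_add (b : Atoms L) (z : OSModule R L) :
    osDel R L (osMul R L (osE R L {b}) z) + osMul R L (osE R L {b}) (osDel R L z) = z := by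
  refine LinearMap.congr_fun (f := osDel R L ∘ₗ osMul R L (osE R L {b})
    + osMul R L (osE R L {b}) ∘ₗ osDel R L) (g := LinearMap.id)
    (OSModule.linearMap_ext R L fun T => ?_) z
  by_cases hb : b ∈ T
  · simp [osMul_osE_singleton_of_mem hb, osMul_singleton_osDel_osE_of_mem hb]
  · exact osDel_osMul_singleton_osE_add_of_notMem hb

lemma osMul_singleton_osMul (b : Atoms L) (T : Finset (Atoms L)) (z : OSModule R L) :
    osMul R L (osE R L {b}) (osMul R L (osE R L T) z)
      = osMul R L (osMul R L (osE R L {b}) (osE R L T)) z := by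
  refine LinearMap.congr_fun (f := osMul R L (osE R L {b}) ∘ₗ osMul R L (osE R L T))
    (OSModule.linearMap_ext R L fun C => ?_) z
  rw [LinearMap.comp_apply, osMul_osE]
  by_cases hbT : b ∈ T
  · rw [osMul_osE_singleton_of_mem hbT, map_zero, LinearMap.zero_apply]
    split_ifs
    · rw [map_smul, osMul_osE_singleton_of_mem (Finset.mem_union_left C hbT), smul_zero]
    · exact map_zero _
  rw [osMul_osE_singleton_of_notMem hbT, map_smul, LinearMap.smul_apply, osMul_osE]
  by_cases hTC : Disjoint T C
  · by_cases hbC : b ∈ C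
    · rw [if_pos hTC, if_neg fun h => Finset.disjoint_left.1 h (Finset.mem_insert_self b T) hbC,
        map_smul, osMul_osE_singleton_of_mem (Finset.mem_union_right T hbC), smul_zero, smul_zero]
    · rw [if_pos hTC, if_pos (Finset.disjoint_insert_left.2 ⟨hbC, hTC⟩), map_smul,
        osMul_osE_singleton_of_notMem fun h => (Finset.mem_union.1 h).elim hbT hbC, smul_smul,
        smul_smul, ← pow_add, ← pow_add, Finset.insert_union, delSign_union hTC,
        mulSign_insert_left hbT]
      ring_nf
  · rw [if_neg hTC, if_neg fun h => hTC (h.mono_left (Finset.subset_insert b T)), map_zero,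
      smul_zero]

variable (gl : GeometricLattice L) {p : L}

lemma osMul_singleton_mem_osIntervalIdeal {b : Atoms L} (hbp : b.val ≤ p) {z : OSModule R L}
    (hz : z ∈ osIntervalIdeal R L gl p) :
    osMul R L (osE R L {b}) z ∈ osIntervalIdeal R L gl p := by
  refine (Submodule.span_le (p := (osIntervalIdeal R L gl p).comap _)).2 ?_ hz
  rintro _ ⟨T, S, hT, hS, hdep, rfl⟩
  rw [SetLike.mem_coe, Submodule.mem_comap, osMul_singleton_osMul]
  by_cases hbT : b ∈ T
  · rw [osMul_osE_singleton_of_mem hbT, map_zero, LinearMap.zero_apply]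
    exact Submodule.zero_mem _
  · rw [osMul_osE_singleton_of_notMem hbT, map_smul, LinearMap.smul_apply]
    exact Submodule.smul_mem _ _ (Submodule.subset_span
      ⟨insert b T, S, (Finset.forall_mem_insert _ _ _).2 ⟨hbp, hT⟩, hS, hdep, rfl⟩)

lemma osDel_osE_mem_osIntervalIdeal {S : Finset (Atoms L)} (hS : ∀ a ∈ S, a.val ≤ p)
    (hdep : IsDepSet L gl S) : osDel R L (osE R L S) ∈ osIntervalIdeal R L gl p :=
  Submodule.subset_span ⟨∅, S, by simp, hS, hdep, (osMul_osE_empty R L _).symm⟩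

lemma osDel_osMul_singleton_osE_mem {b : Atoms L} (hbp : b.val ≤ p) {i : ℕ}
    {S : Finset (Atoms L)} (hSp : ∀ a ∈ S, a.val ≤ p) (hrk : gl.rk (S.sup fun a => a.val) = i) :
    osDel R L (osMul R L (osE R L {b}) (osE R L S))
      ∈ (osIntervalPiece R L gl p (i + 1)).map (osDel R L) ⊔ osIntervalIdeal R L gl p := by
  by_cases hbS : b ∈ S
  · rw [osMul_osE_singleton_of_mem hbS, map_zero]
    exact Submodule.zero_mem _
  rw [osMul_osE_singleton_of_notMem hbS, map_smul]
  have hbSp : ∀ a ∈ insert b S, a.val ≤ p := (Finset.forall_mem_insert _ _ _).2 ⟨hbp, hSp⟩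
  have hle : gl.rk ((insert b S).sup fun a => a.val) ≤ i + 1 := by
    rw [Finset.sup_insert, ← hrk]
    exact gl.rk_sup_le_of_isAtom b.2 _
  have hge : i ≤ gl.rk ((insert b S).sup fun a => a.val) :=
    hrk ▸ gl.rk_strictMono.monotone (Finset.sup_mono (Finset.subset_insert b S))
  rcases hle.eq_or_lt with hrk' | hrk'
  · exact Submodule.mem_sup_left (Submodule.smul_mem _ _
      (Submodule.mem_map_of_mem (Submodule.subset_span ⟨insert b S, hbSp, hrk', rfl⟩)))
  · have hdep : IsDepSet L gl (insert b S) := by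
      have := gl.rk_sup_atoms_le_card S
      rw [IsDepSet, Finset.card_insert_of_notMem hbS]
      omega
    exact Submodule.mem_sup_right
      (Submodule.smul_mem _ _ (osDel_osE_mem_osIntervalIdeal gl hbSp hdep))

lemma osDel_osMul_singleton_mem {b : Atoms L} (hbp : b.val ≤ p) {i : ℕ} {x : OSModule R L}
    (hx : x ∈ osIntervalPiece R L gl p i) :
    osDel R L (osMul R L (osE R L {b}) x)
      ∈ (osIntervalPiece R L gl p (i + 1)).map (osDel R L) ⊔ osIntervalIdeal R L gl p := by
  refine Submodule.mem_comap.1 ((Submodule.span_le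
    (p := ((osIntervalPiece R L gl p (i + 1)).map (osDel R L) ⊔ osIntervalIdeal R L gl p).comap
      (osDel R L ∘ₗ osMul R L (osE R L {b})))).2 ?_ hx)
  rintro _ ⟨S, hSp, hrk, rfl⟩
  exact osDel_osMul_singleton_osE_mem gl hbp hSp hrk

end

/-- For `p ≠ ⊥` in a finite geometric lattice `L`, the chain complex
`(A^*([⊥, p]), ∂)`, graded so that the degree `-i` part is
`⊕_{q ≤ p, rk q = i} A^*([⊥, p])_q`, is exact: every cycle modulo the
Orlik–Solomon ideal of `[⊥, p]` is a boundary modulo that ideal. -/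
theorem osComplex_interval_exact (gl : GeometricLattice L) (p : L) (hp : p ≠ ⊥) :
    ∀ i : ℕ, ∀ x ∈ osIntervalPiece R L gl p i,
      osDel R L x ∈ osIntervalIdeal R L gl p →
        ∃ y ∈ osIntervalPiece R L gl p (i + 1),
          x - osDel R L y ∈ osIntervalIdeal R L gl p := by
  intro i x hx hdx
  obtain ⟨b, hb, hbp⟩ := (eq_bot_or_exists_atom_le p).resolve_left hp
  obtain ⟨_, ⟨y, hy, rfl⟩, v, hv, hyv⟩ :=
    Submodule.mem_sup.1 (osDel_osMul_singleton_mem gl (b := ⟨b, hb⟩) hbp hx)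
  have hhom := osDel_osMul_singleton_add (R := R) ⟨b, hb⟩ x
  rw [← hyv] at hhom
  have hsplit : x - osDel R L y = v + osMul R L (osE R L {⟨b, hb⟩}) (osDel R L x) :=
    sub_eq_iff_eq_add.2 (hhom.symm.trans (by abel))
  exact ⟨y, hy, hsplit ▸ Submodule.add_mem _ hv
    (osMul_singleton_mem_osIntervalIdeal gl (b := ⟨b, hb⟩) hbp hdx)⟩
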